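/- Let Δ̃ and Δ̃* be complex Hilbert spaces and let U10 = [[A10,B10],[C10,0]] : H10 ⊕ Δ̃ → H10 ⊕ Δ̃* be the explicit colligation on H10 = ℓ²(ℕ, Δ̃) ⊕ ℓ²(ℕ, Δ̃*) with A10(x,y) = (Sx, S*y), B10 δ = (δ·e0, 0), C10(x,y) = y(0) (S the unilateral forward shift, S* the backward shift). Then U10 is, up to unitary equivalence, the unique simple unitary colligation with input space Δ̃, output space Δ̃* and zero characteristic function: if U = [[A,B],[C,D]] : H ⊕ Δ̃ → H ⊕ Δ̃* is any simple unitary colligation with D = 0 and C Aⁿ B = 0 for all n ≥ 0, then there exists a unitary operator τ : H → H10 with τ∘A = A10∘τ, τ∘B = B10, and C = C10∘τ. -/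

import Mathlib

/-!
Unitarity of `U = [[A, B], [C, 0]]` gives `A*A + C*C = 1`, `A*B = 0`, `B*B = 1`, and, since the
adjoint colligation `[[A*, C*], [B*, 0]]` is again isometric with zero characteristic function
(`B* A*ⁿ C* = (C Aⁿ B)* = 0`), also the dual identities. Together with `C Aⁿ B = 0` they make the
maps `Aⁿ B : Δ̃ → H` isometries with mutually orthogonal ranges, likewise `A*ⁿ C* : Δ̃* → H`, and
`⟪Aⁿ B e, A*ᵐ C* ε⟫ = ⟪C Aᵐ⁺ⁿ B e, ε⟫ = 0` makes the two families orthogonal to each other. So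
`(x, y) ↦ ∑ Aⁿ B xₙ + ∑ A*ⁿ C* yₙ` is an isometry `H10 → H` carrying `A10` to `A`, `(S*, S)` to
`A*`, `B10` to `B` and `C10` to `C`. Its range is closed, contains the ranges of `B` and `C*`
and is invariant under `A` and `A*`, hence is all of `H` by simplicity; `τ` is its inverse.
-/

open ContinuousLinearMap

/-- The state space `H10 = ℓ²(ℕ, Δ̃) ⊕₂ ℓ²(ℕ, Δ̃*)` of the simple unitary colligation with
zero characteristic function. -/
noncomputable abbrev H10 (Δ Δs : Type*) [NormedAddCommGroup Δ] [NormedAddCommGroup Δs] :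
    Type _ :=
  WithLp 2 ((lp (fun _ : ℕ => Δ) 2) × (lp (fun _ : ℕ => Δs) 2))


open scoped InnerProductSpace

noncomputable section

namespace lp

variable {V : Type*} [NormedAddCommGroup V]

def backwardShift (x : lp (fun _ : ℕ => V) 2) : lp (fun _ : ℕ => V) 2 :=
  ⟨fun n => x (n + 1), memℓp_gen <|
    ((memℓp_gen_iff (by norm_num)).mp x.2).comp_injective (add_left_injective 1)⟩

def forwardShift (x : lp (fun _ : ℕ => V) 2) : lp (fun _ : ℕ => V) 2 :=
  ⟨fun n => Nat.casesOn n 0 fun k => x k, by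
    refine memℓp_gen ((summable_nat_add_iff 1).mp ?_)
    exact (memℓp_gen_iff (by norm_num)).mp x.2⟩

@[simp]
theorem backwardShift_apply (x : lp (fun _ : ℕ => V) 2) (n : ℕ) :
    backwardShift x n = x (n + 1) := rfl

@[simp]
theorem forwardShift_zero (x : lp (fun _ : ℕ => V) 2) : forwardShift x 0 = 0 := rfl

@[simp]
theorem forwardShift_succ (x : lp (fun _ : ℕ => V) 2) (n : ℕ) :
    forwardShift x (n + 1) = x n := rfl

end lp

open lp

variable {𝕜 H E F : Type*} [RCLike 𝕜]
  [NormedAddCommGroup H] [InnerProductSpace 𝕜 H]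
  [NormedAddCommGroup E] [InnerProductSpace 𝕜 E]
  [NormedAddCommGroup F] [InnerProductSpace 𝕜 F]

theorem ContinuousLinearMap.adjoint_pow [CompleteSpace H] (A : H →L[𝕜] H) (n : ℕ) :
    adjoint (A ^ n) = adjoint A ^ n := by
  simp only [← star_eq_adjoint, star_pow]

def LinearIsometry.coprodOfOrthogonal {X Y : Type*}
    [NormedAddCommGroup X] [InnerProductSpace 𝕜 X] [NormedAddCommGroup Y] [InnerProductSpace 𝕜 Y]
    (f : X →ₗᵢ[𝕜] H) (g : Y →ₗᵢ[𝕜] H) (hfg : ∀ x y, ⟪f x, g y⟫_𝕜 = 0) :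
    WithLp 2 (X × Y) →ₗᵢ[𝕜] H :=
  ((f.toLinearMap.coprod g.toLinearMap) ∘ₗ (WithLp.linearEquiv 2 𝕜 (X × Y)).toLinearMap)
    |>.isometryOfInner fun p q => by
      simp [WithLp.prod_inner_apply, inner_add_left, inner_add_right, hfg,
        inner_eq_zero_symm.mp (hfg _ _)]

@[simp]
theorem LinearIsometry.coprodOfOrthogonal_apply {X Y : Type*}
    [NormedAddCommGroup X] [InnerProductSpace 𝕜 X] [NormedAddCommGroup Y] [InnerProductSpace 𝕜 Y]
    (f : X →ₗᵢ[𝕜] H) (g : Y →ₗᵢ[𝕜] H) (hfg : ∀ x y, ⟪f x, g y⟫_𝕜 = 0) (p : WithLp 2 (X × Y)) :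
    f.coprodOfOrthogonal g hfg p = f p.fst + g p.snd := rfl

section Colligation

variable {A : H →L[𝕜] H} {B : E →L[𝕜] H} {C : H →L[𝕜] F} {D : E →L[𝕜] F}

theorem inner_colligation_eq_of_norm_sq
    (hU : ∀ x e, ‖A x + B e‖ ^ 2 + ‖C x + D e‖ ^ 2 = ‖x‖ ^ 2 + ‖e‖ ^ 2) (x y : H) (e f : E) :
    ⟪A x + B e, A y + B f⟫_𝕜 + ⟪C x + D e, C y + D f⟫_𝕜 = ⟪x, y⟫_𝕜 + ⟪e, f⟫_𝕜 := by
  let U : WithLp 2 (H × E) →ₗ[𝕜] WithLp 2 (H × F) :=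
    (WithLp.linearEquiv 2 𝕜 (H × F)).symm.toLinearMap ∘ₗ
      ((A.toLinearMap.coprod B.toLinearMap).prod (C.toLinearMap.coprod D.toLinearMap)) ∘ₗ
      (WithLp.linearEquiv 2 𝕜 (H × E)).toLinearMap
  have hU' : ∀ p, ‖U p‖ = ‖p‖ := fun p => by
    rw [← sq_eq_sq₀ (norm_nonneg _) (norm_nonneg _), WithLp.prod_norm_sq_eq_of_L2,
      WithLp.prod_norm_sq_eq_of_L2]
    exact hU p.fst p.snd
  simpa [U, WithLp.prod_inner_apply] using
    (⟨U, hU'⟩ : WithLp 2 (H × E) →ₗᵢ[𝕜] WithLp 2 (H × F)).inner_map_map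
      (WithLp.toLp 2 (x, e)) (WithLp.toLp 2 (y, f))

theorem norm_sq_adjoint_colligation [CompleteSpace H] [CompleteSpace E] [CompleteSpace F]
    (hU : ∀ x e, ‖A x + B e‖ ^ 2 + ‖C x + D e‖ ^ 2 = ‖x‖ ^ 2 + ‖e‖ ^ 2)
    (hsurj : ∀ y ε, ∃ x e, A x + B e = y ∧ C x + D e = ε) (y : H) (ε : F) :
    ‖adjoint A y + adjoint C ε‖ ^ 2 + ‖adjoint B y + adjoint D ε‖ ^ 2 = ‖y‖ ^ 2 + ‖ε‖ ^ 2 := by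
  obtain ⟨x, e, rfl, rfl⟩ := hsurj y ε
  have hx : adjoint A (A x + B e) + adjoint C (C x + D e) = x := ext_inner_left 𝕜 fun v => by
    simpa [adjoint_inner_right, inner_add_right] using inner_colligation_eq_of_norm_sq hU v x 0 e
  have he : adjoint B (A x + B e) + adjoint D (C x + D e) = e := ext_inner_left 𝕜 fun w => by
    simpa [adjoint_inner_right, inner_add_right] using inner_colligation_eq_of_norm_sq hU 0 x w e
  rw [hx, he, hU]

end Colligation

/-- `[[A, B], [C, 0]] : H ⊕ E → H ⊕ F` is an isometric colligation with zero characteristic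
function. -/
structure IsIsometricZeroCharColligation (A : H →L[𝕜] H) (B : E →L[𝕜] H) (C : H →L[𝕜] F) :
    Prop where
  norm_sq : ∀ x e, ‖A x + B e‖ ^ 2 + ‖C x‖ ^ 2 = ‖x‖ ^ 2 + ‖e‖ ^ 2
  apply_pow_apply : ∀ (n : ℕ) (e : E), C ((A ^ n) (B e)) = 0

namespace IsIsometricZeroCharColligation

variable {A : H →L[𝕜] H} {B : E →L[𝕜] H} {C : H →L[𝕜] F}

theorem inner_map_map (h : IsIsometricZeroCharColligation A B C) (x y : H) (e f : E) :
    ⟪A x + B e, A y + B f⟫_𝕜 + ⟪C x, C y⟫_𝕜 = ⟪x, y⟫_𝕜 + ⟪e, f⟫_𝕜 := by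
  simpa using inner_colligation_eq_of_norm_sq (D := 0) (by simpa using h.norm_sq) x y e f

variable [CompleteSpace H]

theorem adjoint_apply_apply_of_apply_eq_zero (h : IsIsometricZeroCharColligation A B C) {x : H}
    (hx : C x = 0) : adjoint A (A x) = x :=
  ext_inner_left 𝕜 fun v => by simpa [adjoint_inner_right, hx] using h.inner_map_map v x 0 0

theorem adjoint_apply_eq_zero (h : IsIsometricZeroCharColligation A B C) (e : E) :
    adjoint A (B e) = 0 :=
  ext_inner_left 𝕜 fun v => by simpa [adjoint_inner_right] using h.inner_map_map v 0 0 e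

theorem inner_pow_apply_pow_apply (h : IsIsometricZeroCharColligation A B C) (n m : ℕ) (e f : E) :
    ⟪(A ^ n) (B e), (A ^ m) (B f)⟫_𝕜 = if n = m then ⟪e, f⟫_𝕜 else 0 := by
  induction n generalizing m with
  | zero =>
    cases m with
    | zero => simpa using h.inner_map_map 0 0 e f
    | succ m => simp [pow_succ', ← adjoint_inner_left, h.adjoint_apply_eq_zero]
  | succ n ih =>
    cases m with
    | zero => simp [pow_succ', ← adjoint_inner_right, h.adjoint_apply_eq_zero]
    | succ m =>
      rw [pow_succ', pow_succ', mul_apply_eq_comp, mul_apply_eq_comp,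
        ← adjoint_inner_right, h.adjoint_apply_apply_of_apply_eq_zero (h.apply_pow_apply m f), ih]
      simp

theorem adjoint_apply_pow_succ_apply (h : IsIsometricZeroCharColligation A B C) (n : ℕ) (e : E) :
    adjoint A ((A ^ (n + 1)) (B e)) = (A ^ n) (B e) := by
  rw [pow_succ', mul_apply_eq_comp,
    h.adjoint_apply_apply_of_apply_eq_zero (h.apply_pow_apply n e)]

theorem adjoint_apply_pow_apply [CompleteSpace E] (h : IsIsometricZeroCharColligation A B C)
    (n : ℕ) (e : E) : adjoint B ((A ^ n) (B e)) = if n = 0 then e else 0 :=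
  ext_inner_left 𝕜 fun v => by
    simpa [adjoint_inner_right, eq_comm (a := 0), apply_ite] using
      h.inner_pow_apply_pow_apply 0 n v e

def powIsometry (h : IsIsometricZeroCharColligation A B C) (n : ℕ) : E →ₗᵢ[𝕜] H :=
  ((A ^ n) ∘L B).toLinearMap.isometryOfInner fun e f =>
    (h.inner_pow_apply_pow_apply n n e f).trans (if_pos rfl)

theorem orthogonalFamily_powIsometry (h : IsIsometricZeroCharColligation A B C) :
    OrthogonalFamily 𝕜 (fun _ : ℕ => E) h.powIsometry :=
  fun n m hnm e f => (h.inner_pow_apply_pow_apply n m e f).trans (if_neg hnm)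

def seriesIsometry (h : IsIsometricZeroCharColligation A B C) :
    lp (fun _ : ℕ => E) 2 →ₗᵢ[𝕜] H :=
  h.orthogonalFamily_powIsometry.linearIsometry

theorem hasSum_seriesIsometry (h : IsIsometricZeroCharColligation A B C)
    (x : lp (fun _ : ℕ => E) 2) : HasSum (fun n => (A ^ n) (B (x n))) (h.seriesIsometry x) :=
  h.orthogonalFamily_powIsometry.hasSum_linearIsometry x

theorem seriesIsometry_single (h : IsIsometricZeroCharColligation A B C) (e : E) :
    h.seriesIsometry (lp.single 2 0 e) = B e := by
  rw [seriesIsometry, OrthogonalFamily.linearIsometry_apply_single]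
  simp [powIsometry]

theorem seriesIsometry_forwardShift (h : IsIsometricZeroCharColligation A B C)
    (x : lp (fun _ : ℕ => E) 2) : h.seriesIsometry (forwardShift x) = A (h.seriesIsometry x) := by
  refine (h.hasSum_seriesIsometry _).unique ((hasSum_nat_add_iff' 1).mp ?_)
  simpa [pow_succ', mul_apply_eq_comp] using (h.hasSum_seriesIsometry x).mapL A

theorem seriesIsometry_backwardShift (h : IsIsometricZeroCharColligation A B C)
    (x : lp (fun _ : ℕ => E) 2) :
    h.seriesIsometry (backwardShift x) = adjoint A (h.seriesIsometry x) := by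
  have hshift := (hasSum_nat_add_iff' 1).mpr ((h.hasSum_seriesIsometry x).mapL (adjoint A))
  simp only [h.adjoint_apply_pow_succ_apply, Finset.range_one, Finset.sum_singleton, pow_zero,
    one_apply_eq_self, h.adjoint_apply_eq_zero, sub_zero] at hshift
  exact (h.hasSum_seriesIsometry _).unique hshift

theorem apply_pow_seriesIsometry_eq_zero (h : IsIsometricZeroCharColligation A B C) (m : ℕ)
    (x : lp (fun _ : ℕ => E) 2) : C ((A ^ m) (h.seriesIsometry x)) = 0 := by
  induction m generalizing x with
  | zero =>
    have hzero : HasSum (fun n => C ((A ^ n) (B (x n)))) 0 := by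
      simp only [h.apply_pow_apply]
      exact hasSum_zero
    simpa using ((h.hasSum_seriesIsometry x).mapL C).unique hzero
  | succ m ih => rw [pow_succ, mul_apply_eq_comp, ← h.seriesIsometry_forwardShift, ih]

theorem adjoint_apply_seriesIsometry [CompleteSpace E] (h : IsIsometricZeroCharColligation A B C)
    (x : lp (fun _ : ℕ => E) 2) : adjoint B (h.seriesIsometry x) = x 0 := by
  have hsingle : HasSum (fun n => adjoint B ((A ^ n) (B (x n)))) (x 0) := by
    convert hasSum_single (f := fun n => adjoint B ((A ^ n) (B (x n)))) 0 fun n hn => by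
      rw [h.adjoint_apply_pow_apply, if_neg hn]
    rw [h.adjoint_apply_pow_apply, if_pos rfl]
  exact ((h.hasSum_seriesIsometry x).mapL (adjoint B)).unique hsingle

variable [CompleteSpace E] [CompleteSpace F]

theorem inner_seriesIsometry_seriesIsometry (h : IsIsometricZeroCharColligation A B C)
    (h' : IsIsometricZeroCharColligation (adjoint A) (adjoint C) (adjoint B))
    (x : lp (fun _ : ℕ => E) 2) (y : lp (fun _ : ℕ => F) 2) :
    ⟪h.seriesIsometry x, h'.seriesIsometry y⟫_𝕜 = 0 := by
  have hzero : HasSum (fun n => ⟪h.seriesIsometry x, (adjoint A ^ n) (adjoint C (y n))⟫_𝕜) 0 := by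
    simp only [← adjoint_pow, adjoint_inner_right, h.apply_pow_seriesIsometry_eq_zero,
      inner_zero_left]
    exact hasSum_zero
  exact ((h'.hasSum_seriesIsometry y).mapL (innerSL 𝕜 (h.seriesIsometry x))).unique hzero

def modelIsometry (h : IsIsometricZeroCharColligation A B C)
    (h' : IsIsometricZeroCharColligation (adjoint A) (adjoint C) (adjoint B)) :
    H10 E F →ₗᵢ[𝕜] H :=
  h.seriesIsometry.coprodOfOrthogonal h'.seriesIsometry (h.inner_seriesIsometry_seriesIsometry h')

variable (h : IsIsometricZeroCharColligation A B C)
  (h' : IsIsometricZeroCharColligation (adjoint A) (adjoint C) (adjoint B))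

theorem modelIsometry_toLp_single_zero (e : E) :
    h.modelIsometry h' (WithLp.toLp 2 (lp.single 2 0 e, 0)) = B e := by
  simp [modelIsometry, h.seriesIsometry_single]

theorem modelIsometry_toLp_zero_single (ε : F) :
    h.modelIsometry h' (WithLp.toLp 2 (0, lp.single 2 0 ε)) = adjoint C ε := by
  simp [modelIsometry, h'.seriesIsometry_single]

theorem modelIsometry_toLp_forwardShift_backwardShift (p : H10 E F) :
    h.modelIsometry h' (WithLp.toLp 2 (forwardShift p.fst, backwardShift p.snd)) =
      A (h.modelIsometry h' p) := by
  simp [modelIsometry, h.seriesIsometry_forwardShift, h'.seriesIsometry_backwardShift]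

theorem modelIsometry_toLp_backwardShift_forwardShift (p : H10 E F) :
    h.modelIsometry h' (WithLp.toLp 2 (backwardShift p.fst, forwardShift p.snd)) =
      adjoint A (h.modelIsometry h' p) := by
  simp [modelIsometry, h.seriesIsometry_backwardShift, h'.seriesIsometry_forwardShift]

theorem apply_modelIsometry (p : H10 E F) : C (h.modelIsometry h' p) = p.snd 0 := by
  have hfst : C (h.seriesIsometry p.fst) = 0 := by
    simpa using h.apply_pow_seriesIsometry_eq_zero 0 p.fst
  have hsnd := h'.adjoint_apply_seriesIsometry p.snd
  rw [adjoint_adjoint] at hsnd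
  simp [modelIsometry, hfst, hsnd]

theorem surjective_modelIsometry
    (hsimple : ∀ T : Submodule 𝕜 H, IsClosed (T : Set H) → (∀ e, B e ∈ T) →
      (∀ ε, adjoint C ε ∈ T) → (∀ x ∈ T, A x ∈ T) → (∀ x ∈ T, adjoint A x ∈ T) → T = ⊤) :
    Function.Surjective (h.modelIsometry h') := by
  refine LinearMap.range_eq_top.mp <| hsimple _ ?_
    (fun e => ⟨_, h.modelIsometry_toLp_single_zero h' e⟩)
    (fun ε => ⟨_, h.modelIsometry_toLp_zero_single h' ε⟩) ?_ ?_
  · exact (h.modelIsometry h').isometry.isClosedEmbedding.isClosed_range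
  · rintro _ ⟨p, rfl⟩
    exact ⟨_, h.modelIsometry_toLp_forwardShift_backwardShift h' p⟩
  · rintro _ ⟨p, rfl⟩
    exact ⟨_, h.modelIsometry_toLp_backwardShift_forwardShift h' p⟩

theorem adjoint (h : IsIsometricZeroCharColligation A B C)
    (hsurj : ∀ y ε, ∃ x e, A x + B e = y ∧ C x = ε) :
    IsIsometricZeroCharColligation (adjoint A) (adjoint C) (adjoint B) where
  norm_sq y ε := by
    have h0 := norm_sq_adjoint_colligation (D := 0) (by simpa using h.norm_sq)
      (by simpa using hsurj) y ε
    rwa [map_zero, zero_apply, add_zero] at h0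
  apply_pow_apply n ε := ext_inner_right 𝕜 fun e => by
    rw [adjoint_inner_left, ← adjoint_pow, adjoint_inner_left, adjoint_inner_left,
      h.apply_pow_apply, inner_zero_left, inner_zero_right]

end IsIsometricZeroCharColligation

end

theorem stmt_14 {Δ Δs H : Type*}
    [NormedAddCommGroup Δ] [InnerProductSpace ℂ Δ] [CompleteSpace Δ]
    [NormedAddCommGroup Δs] [InnerProductSpace ℂ Δs] [CompleteSpace Δs]
    [NormedAddCommGroup H] [InnerProductSpace ℂ H] [CompleteSpace H]
    -- the explicit colligation `U10` on `H10`
    (A10 : H10 Δ Δs →L[ℂ] H10 Δ Δs)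
    (hA10 : ∀ p : H10 Δ Δs,
      ((WithLp.equiv 2 _ (A10 p)).1) 0 = 0 ∧
      (∀ n : ℕ, ((WithLp.equiv 2 _ (A10 p)).1) (n + 1) = ((WithLp.equiv 2 _ p).1) n) ∧
      (∀ n : ℕ, ((WithLp.equiv 2 _ (A10 p)).2) n = ((WithLp.equiv 2 _ p).2) (n + 1)))
    (B10 : Δ →L[ℂ] H10 Δ Δs)
    (hB10 : ∀ δ : Δ, WithLp.equiv 2 _ (B10 δ) = (lp.single 2 0 δ, 0))
    (C10 : H10 Δ Δs →L[ℂ] Δs)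
    (hC10 : ∀ p : H10 Δ Δs, C10 p = ((WithLp.equiv 2 _ p).2) 0)
    -- an arbitrary simple unitary colligation `U = [[A,B],[C,Dz]] : H ⊕ Δ̃ → H ⊕ Δ̃*`
    (A : H →L[ℂ] H) (B : Δ →L[ℂ] H) (C : H →L[ℂ] Δs) (Dz : Δ →L[ℂ] Δs)
    (hiso : ∀ (x : H) (e : Δ),
        ‖A x + B e‖ ^ 2 + ‖C x + Dz e‖ ^ 2 = ‖x‖ ^ 2 + ‖e‖ ^ 2)
    (hsurj : ∀ (y : H) (ε : Δs), ∃ (x : H) (e : Δ), A x + B e = y ∧ C x + Dz e = ε)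
    (hsimple : ∀ T : Submodule ℂ H, IsClosed (T : Set H) →
        (∀ e : Δ, B e ∈ T) →
        (∀ ε : Δs, adjoint C ε ∈ T) →
        (∀ x ∈ T, A x ∈ T) →
        (∀ x ∈ T, adjoint A x ∈ T) →
        T = ⊤)
    (hDz : Dz = 0)
    (hchar : ∀ n : ℕ, C.comp ((A ^ n).comp B) = 0) :
    ∃ τ : H ≃ₗᵢ[ℂ] H10 Δ Δs,
      (∀ x : H, τ (A x) = A10 (τ x)) ∧
      (∀ e : Δ, τ (B e) = B10 e) ∧
      (∀ x : H, C x = C10 (τ x)) := by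
  subst hDz
  have h : IsIsometricZeroCharColligation A B C :=
    ⟨by simpa using hiso, fun n e => by simpa using congr($(hchar n) e)⟩
  have h' := h.adjoint (by simpa using hsurj)
  let τ := LinearIsometryEquiv.ofSurjective _ (h.surjective_modelIsometry h' hsimple)
  have hτ : ∀ p, τ p = h.modelIsometry h' p := fun _ => rfl
  have hA10' : ∀ p, A10 p = WithLp.toLp 2 (lp.forwardShift p.fst, lp.backwardShift p.snd) := by
    intro p
    obtain ⟨h0, h1, h2⟩ := hA10 p
    refine WithLp.ofLp_injective 2 (Prod.ext (lp.ext (funext fun n => ?_)) (lp.ext (funext h2)))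
    cases n with
    | zero => exact h0
    | succ n => exact h1 n
  refine ⟨τ.symm, fun x => ?_, fun e => ?_, fun x => ?_⟩
  · obtain ⟨p, rfl⟩ := τ.surjective x
    rw [τ.symm_apply_apply, τ.symm_apply_eq, hA10', hτ, hτ,
      h.modelIsometry_toLp_forwardShift_backwardShift]
  · rw [τ.symm_apply_eq, hτ, ← (WithLp.equiv 2 _).symm_apply_apply (B10 e), hB10]
    exact (h.modelIsometry_toLp_single_zero h' e).symm
  · obtain ⟨p, rfl⟩ := τ.surjective x
    rw [hC10, τ.symm_apply_apply, hτ, h.apply_modelIsometry]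
    rfl
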